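/- arXiv:2201.11465 — 6 statements merged into one kernel-verified Lean document; each statement's English description precedes it below -/
import Mathlib

section
/- The MN array is a valid placement delivery array: for positive integers K and t with t ≤ K, the array P indexed by rows T ∈ (subsets of [K] of size t) and columns k ∈ [K], defined by P(T,k) = * if k ∈ T and P(T,k) = T ∪ {k} otherwise, satisfies: (C1) each column contains exactly (K-1 choose t-1) stars; (C3) if P(T1,k1) = P(T2,k2) = S for a (t+1)-set S with (T1,k1) ≠ (T2,k2), then k2 ∈ T1 and k1 ∈ T2 (i.e., P(T1,k2) = P(T2,k1) = *). -/
/-- The MN array is a valid placement delivery array.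
Rows are indexed by `t`-subsets `T` of `[K]`, columns by `k ∈ [K]`; the entry `(T,k)` is a
star iff `k ∈ T`, and otherwise carries the label `T ∪ {k}`.
(C1) each column contains exactly `(K-1).choose (t-1)` stars;
(C3) if two distinct non-star entries carry the same label then the crossing entries are stars. -/
theorem stmt_0 (K t : ℕ) (hK : 0 < K) (ht : 0 < t) (htK : t ≤ K) :
    (∀ k : Fin K,
      (Finset.univ.filter (fun T : Finset (Fin K) => T.card = t ∧ k ∈ T)).card
        = (K - 1).choose (t - 1)) ∧
    (∀ (T₁ T₂ : Finset (Fin K)) (k₁ k₂ : Fin K),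
      T₁.card = t → T₂.card = t → k₁ ∉ T₁ → k₂ ∉ T₂ →
      insert k₁ T₁ = insert k₂ T₂ → (T₁, k₁) ≠ (T₂, k₂) →
      k₂ ∈ T₁ ∧ k₁ ∈ T₂) := by
  constructor
  · intro k
    have hcard : ((Finset.univ.erase k).powersetCard (t - 1)).card
        = (K - 1).choose (t - 1) := by
      rw [Finset.card_powersetCard, Finset.card_erase_of_mem (Finset.mem_univ k),
        Finset.card_univ, Fintype.card_fin]
    rw [← hcard]
    apply Finset.card_bij (fun T _ => T.erase k)
    · intro T hT
      simp only [Finset.mem_filter, Finset.mem_univ, true_and] at hT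
      rw [Finset.mem_powersetCard]
      exact ⟨Finset.erase_subset_erase k (Finset.subset_univ T),
        by rw [Finset.card_erase_of_mem hT.2, hT.1]⟩
    · intro T₁ h₁ T₂ h₂ he
      simp only [Finset.mem_filter, Finset.mem_univ, true_and] at h₁ h₂
      rw [← Finset.insert_erase h₁.2, ← Finset.insert_erase h₂.2, he]
    · intro S hS
      rw [Finset.mem_powersetCard] at hS
      have hkS : k ∉ S := fun h => (Finset.mem_erase.mp (hS.1 h)).1 rfl
      refine ⟨insert k S, ?_, ?_⟩
      · simp only [Finset.mem_filter, Finset.mem_univ, true_and]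
        exact ⟨by rw [Finset.card_insert_of_notMem hkS, hS.2]; omega,
          Finset.mem_insert_self k S⟩
      · rw [Finset.erase_insert hkS]
  · intro T₁ T₂ k₁ k₂ h₁ h₂ hk₁ hk₂ hins hne
    have hkk : k₁ ≠ k₂ := by
      rintro rfl
      apply hne
      have : T₁ = T₂ := by
        rw [← Finset.erase_insert hk₁, ← Finset.erase_insert hk₂, hins]
      rw [this]
    constructor
    · have : k₂ ∈ insert k₁ T₁ := by rw [hins]; exact Finset.mem_insert_self _ _
      rcases Finset.mem_insert.mp this with h | h
      · exact absurd h.symm hkk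
      · exact h
    · have : k₁ ∈ insert k₂ T₂ := by rw [← hins]; exact Finset.mem_insert_self _ _
      rcases Finset.mem_insert.mp this with h | h
      · exact absurd h hkk
      · exact h
end

section
/- The total number of distinct non-star labels in the MN PDA with parameters K and t equals (K choose t+1), so the resulting coded caching scheme has load R = (K choose t+1)/(K choose t) = (K - t)/(t + 1). -/
/-- The number of distinct non-star labels in the MN PDA (the `(t+1)`-subsets of `[K]`) equals
`K.choose (t+1)`, and the load `K.choose (t+1) / K.choose t` equals `(K - t)/(t + 1)`. -/
theorem stmt_3 (K t : ℕ) (htK : t ≤ K) :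
    (Finset.univ.filter (fun S : Finset (Fin K) => S.card = t + 1)).card = K.choose (t + 1) ∧
    ((K.choose (t + 1) : ℚ)) / (K.choose t) = ((K - t : ℕ) : ℚ) / (t + 1) := by
  constructor
  · have h := Fintype.card_finset_len (α := Fin K) (t + 1)
    rw [Fintype.card_subtype, Fintype.card_fin] at h
    exact h
  · have hc : (K.choose t : ℚ) ≠ 0 := by
      exact_mod_cast (Nat.choose_pos htK).ne'
    have h := Nat.choose_succ_right_eq K t
    have h' : (K.choose (t + 1) : ℚ) * (t + 1) = (K.choose t) * ((K - t : ℕ)) := by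
      exact_mod_cast congrArg (Nat.cast : ℕ → ℚ) h
    rw [Nat.cast_sub htK] at h'
    push_cast
    field_simp
    rw [Nat.cast_sub htK]
    linarith
end

section
/- For positive integers q, z, m with 0 < z < q, the block array H' = (H'_1, …, H'_m) defined as follows is a valid PDA with parameters (mq, q^m, z·q^{m-1}, q^m(q-z)): rows are indexed by f = (f_1,…,f_m) ∈ [q]^m, the columns of block i are indexed by k ∈ [q], and H'_i(f,k) = * if k ∈ {f_i, <f_i+1>_q, …, <f_i+z-1>_q} (indices mod q, with representatives in [q]), and otherwise H'_i(f,k) = (f_1,…,f_{i-1}, k, f_{i+1},…,f_m, <f_i - k>_q). In particular, each column contains exactly z·q^{m-1} stars, each label vector appears, and Condition C3 holds. -/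
lemma card_val_lt (q z : ℕ) [NeZero q] (hzq : z ≤ q) :
    (Finset.univ.filter fun b : ZMod q => b.val < z).card = z := by
  have himg : (Finset.univ.filter fun b : ZMod q => b.val < z)
      = (Finset.range z).image (Nat.cast : ℕ → ZMod q) := by
    ext b
    simp only [Finset.mem_filter, Finset.mem_univ, true_and, Finset.mem_image,
      Finset.mem_range]
    constructor
    · intro h; exact ⟨b.val, h, by simp [ZMod.natCast_val, ZMod.cast_id]⟩
    · rintro ⟨n, hn, rfl⟩
      rwa [ZMod.val_cast_of_lt (lt_of_lt_of_le hn hzq)]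
  rw [himg, Finset.card_image_of_injOn, Finset.card_range]
  intro a ha b hb hab
  simp only [Finset.coe_range, Set.mem_Iio] at ha hb
  have := congrArg ZMod.val hab
  rwa [ZMod.val_cast_of_lt (lt_of_lt_of_le ha hzq),
    ZMod.val_cast_of_lt (lt_of_lt_of_le hb hzq)] at this

lemma card_shift_val_lt (q z : ℕ) [NeZero q] (hzq : z ≤ q) (k : ZMod q) :
    (Finset.univ.filter fun a : ZMod q => (k - a).val < z).card = z := by
  have h := Finset.card_nbij' (s := Finset.univ.filter fun a : ZMod q => (k - a).val < z)
    (t := Finset.univ.filter fun b : ZMod q => b.val < z)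
    (fun a => k - a) (fun b => k - b) (by intro a ha; simpa using ha) (by intro a ha; simpa using ha)
    (by intro a _; simp) (by intro a _; simp)
  rw [h, card_val_lt q z hzq]

/-- The Partition PDA `H' = (H'_1,…,H'_m)` is a valid `(mq, q^m, z·q^{m-1}, q^m(q-z))` PDA.
Rows are indexed by `f : Fin m → ZMod q`, blocks by `i : Fin m`, columns of each block by
`k : ZMod q`.  The entry `H'_i(f,k)` is a star iff `k ∈ {f_i, f_i+1, …, f_i+z-1}` (cyclically),
i.e. iff `(k - f i).val < z`; otherwise it carries the label
`(Function.update f i k, f i - k)`.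
(C1) each column has exactly `z * q^(m-1)` stars;
(C2) every label vector (i.e. every `(g,d)` with `z ≤ (-d).val`, the last coordinate of an
actual non-star entry) appears;
(C3) if two distinct non-star entries carry the same label then the crossing entries are stars. -/
theorem stmt_4 (q z m : ℕ) (hz : 0 < z) (hzq : z < q) (hm : 0 < m) [NeZero q] :
    (∀ (i : Fin m) (k : ZMod q),
      (Finset.univ.filter (fun f : Fin m → ZMod q => (k - f i).val < z)).card
        = z * q ^ (m - 1)) ∧
    (∀ (g : Fin m → ZMod q) (d : ZMod q), z ≤ (-d).val →
      ∃ (i : Fin m) (f : Fin m → ZMod q) (k : ZMod q),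
        ¬ (k - f i).val < z ∧ Function.update f i k = g ∧ f i - k = d) ∧
    (∀ (i₁ i₂ : Fin m) (f₁ f₂ : Fin m → ZMod q) (k₁ k₂ : ZMod q),
      ¬ (k₁ - f₁ i₁).val < z → ¬ (k₂ - f₂ i₂).val < z →
      (i₁, f₁, k₁) ≠ (i₂, f₂, k₂) →
      Function.update f₁ i₁ k₁ = Function.update f₂ i₂ k₂ →
      f₁ i₁ - k₁ = f₂ i₂ - k₂ →
      (k₂ - f₁ i₂).val < z ∧ (k₁ - f₂ i₁).val < z) := by
  refine ⟨?_, ?_, ?_⟩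
  · -- C1
    intro i k
    have e : {f : Fin m → ZMod q // (k - f i).val < z}
        ≃ {a : ZMod q // (k - a).val < z} × ({j : Fin m // j ≠ i} → ZMod q) :=
      { toFun := fun f => (⟨f.1 i, f.2⟩, fun j => f.1 j.1)
        invFun := fun p => ⟨fun j => if h : j = i then p.1.1 else p.2 ⟨j, h⟩, by
          simpa using p.1.2⟩
        left_inv := fun f => by
          ext j
          dsimp only
          split
          · subst ‹j = i›; rfl
          · rfl
        right_inv := fun p => by
          ext j
          · simp
          · simp [j.2] }
    have hcard := Fintype.card_congr e
    rw [Fintype.card_prod, Fintype.card_subtype, Fintype.card_subtype,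
      card_shift_val_lt q z hzq.le k, Fintype.card_fun] at hcard
    have hsub : Fintype.card {j : Fin m // j ≠ i} = m - 1 := by
      rw [Fintype.card_subtype_compl, Fintype.card_subtype_eq, Fintype.card_fin]
    rw [hsub, ZMod.card] at hcard
    exact hcard
  · -- C2
    intro g d hd
    refine ⟨⟨0, hm⟩, Function.update g ⟨0, hm⟩ (g ⟨0, hm⟩ + d), g ⟨0, hm⟩, ?_, ?_, ?_⟩
    · simp only [Function.update_self]
      have : g ⟨0, hm⟩ - (g ⟨0, hm⟩ + d) = -d := by ring
      rw [this]
      omega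
    · rw [Function.update_idem, Function.update_eq_self]
    · simp only [Function.update_self]; ring
  · -- C3
    intro i₁ i₂ f₁ f₂ k₁ k₂ h₁ h₂ hne hupd hd
    have hii : i₁ ≠ i₂ := by
      rintro rfl
      have hk : k₁ = k₂ := by
        have := congrFun hupd i₁; simpa using this
      have hf : f₁ = f₂ := by
        funext j
        by_cases hj : j = i₁
        · subst hj
          have : f₁ j - k₁ = f₂ j - k₂ := hd
          rw [hk] at this
          have h' := congrArg (· + k₂) this
          simpa using h'
        · have := congrFun hupd j
          simpa [Function.update_of_ne hj] using this
      exact hne (by rw [hk, hf])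
    have h1 : k₁ = f₂ i₁ := by
      have := congrFun hupd i₁
      simpa [Function.update_of_ne hii] using this
    have h2 : f₁ i₂ = k₂ := by
      have := congrFun hupd i₂
      simpa [Function.update_of_ne (Ne.symm hii)] using this
    constructor
    · rw [h2, sub_self, ZMod.val_zero]; exact hz
    · rw [h1, sub_self, ZMod.val_zero]; exact hz
end

section
/- In the Partition PDA H' = (H'_1,…,H'_m) with parameters q, z, m (0 < z < q), each label vector (g_1,…,g_m, d) ∈ [q]^m × [q-z]' that actually occurs, occurs exactly m times in the array: once in each block H'_i, at the entry with row f = (g_1,…,g_{i-1}, <g_i + d>_q, g_{i+1},…,g_m) and column g_i. Hence the Partition PDA is a regular m-PDA (every label occurs exactly m times). -/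
/-- In the Partition PDA, each label `(g, d)` that actually occurs (i.e. with `z ≤ (-d).val`)
occurs exactly `m` times: once in each block `H'_i`, at the entry with row
`f = Function.update g i (g i + d)` and column `g i`.  Hence every occurring label
occurs exactly `m` times (the Partition PDA is a regular `m`-PDA). -/
theorem stmt_5 (q z m : ℕ) (hz : 0 < z) (hzq : z < q) [NeZero q]
    (g : Fin m → ZMod q) (d : ZMod q) (hd : z ≤ (-d).val) :
    (Finset.univ.filter (fun p : Fin m × (Fin m → ZMod q) × ZMod q =>
        ¬ (p.2.2 - p.2.1 p.1).val < z ∧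
        Function.update p.2.1 p.1 p.2.2 = g ∧ p.2.1 p.1 - p.2.2 = d))
      = Finset.univ.image (fun i : Fin m => (i, Function.update g i (g i + d), g i)) ∧
    (Finset.univ.filter (fun p : Fin m × (Fin m → ZMod q) × ZMod q =>
        ¬ (p.2.2 - p.2.1 p.1).val < z ∧
        Function.update p.2.1 p.1 p.2.2 = g ∧ p.2.1 p.1 - p.2.2 = d)).card = m := by
  have key : (Finset.univ.filter (fun p : Fin m × (Fin m → ZMod q) × ZMod q =>
        ¬ (p.2.2 - p.2.1 p.1).val < z ∧
        Function.update p.2.1 p.1 p.2.2 = g ∧ p.2.1 p.1 - p.2.2 = d))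
      = Finset.univ.image (fun i : Fin m => (i, Function.update g i (g i + d), g i)) := by
    ext ⟨i, f, k⟩
    simp only [Finset.mem_filter, Finset.mem_univ, true_and, Finset.mem_image,
      Prod.mk.injEq]
    constructor
    · rintro ⟨h1, h2, h3⟩
      refine ⟨i, rfl, ?_, ?_⟩
      · have hk : k = g i := by
          rw [← h2]; simp [Function.update_self]
        have hfi : f i = g i + d := by
          have : f i = d + k := by
            rw [← h3]; ring
          rw [this, hk]; ring
        funext j
        by_cases hji : j = i
        · subst hji; simp [hfi, Function.update_self]
        · rw [Function.update_of_ne hji, ← h2, Function.update_of_ne hji]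
      · rw [← h2]; simp [Function.update_self]
    · rintro ⟨j, rfl, rfl, rfl⟩
      refine ⟨?_, ?_, ?_⟩
      · simpa [Function.update_self, sub_add_cancel_left] using hd
      · simp [Function.update_self, Function.update_idem, Function.update_eq_self]
      · simp [Function.update_self]
  refine ⟨key, ?_⟩
  rw [key, Finset.card_image_of_injective _ (fun a b h => by simpa using congrArg Prod.fst h)]
  simp
end

section
/- Given a (K,F,Z,S) PDA, the associated coded caching scheme for K users with N files has memory ratio M/N = Z/F and worst-case load at most S/F: concretely, if each file is split into F packets and user k caches packet j of every file exactly when P(j,k)=*, then for any demand vector d ∈ [N]^K, transmitting for each label s the XOR of the packets {W_{d_k, j} : P(j,k) = s} allows every user to decode all F packets of its demanded file. -/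
/-- A `(K,F,Z,S)` PDA (entries `Option (Fin S)`, `none` = star) yields a coded caching scheme:
user `k` caches packet `j` of every file exactly when `P j k = none`, so it caches `N * Z`
of the `N * F` packets (memory ratio `Z/F`); and for any demand `d`, transmitting for every
label `s` the sum (XOR) of the packets `{W (d k) j : P j k = some s}` lets every user decode
all `F` packets of its demanded file: each requested uncached packet `W (d k) j` with
`P j k = some s` equals the transmission for `s` minus packets that user `k` has cached. -/
theorem stmt_7 (K F Z S N : ℕ) (G : Type*) [AddCommGroup G]
    (P : Fin F → Fin K → Option (Fin S))
    (hC1 : ∀ k : Fin K, (Finset.univ.filter (fun j : Fin F => P j k = none)).card = Z)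
    (hC2 : ∀ s : Fin S, ∃ j k, P j k = some s)
    (hC3 : ∀ (j₁ : Fin F) (k₁ : Fin K) (j₂ : Fin F) (k₂ : Fin K) (s : Fin S),
      P j₁ k₁ = some s → P j₂ k₂ = some s → (j₁, k₁) ≠ (j₂, k₂) →
      P j₁ k₂ = none ∧ P j₂ k₁ = none)
    (W : Fin N → Fin F → G) (d : Fin K → Fin N) :
    (∀ k : Fin K,
      (Finset.univ.filter (fun p : Fin N × Fin F => P p.2 k = none)).card = N * Z) ∧
    (∀ (k : Fin K) (j : Fin F),
      P j k = none ∨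
      ∃ s : Fin S, P j k = some s ∧
        (∀ p ∈ (Finset.univ.filter
            (fun p : Fin F × Fin K => P p.1 p.2 = some s)).erase (j, k),
          P p.1 k = none) ∧
        W (d k) j =
          (∑ p ∈ Finset.univ.filter (fun p : Fin F × Fin K => P p.1 p.2 = some s),
              W (d p.2) p.1)
          - ∑ p ∈ (Finset.univ.filter
              (fun p : Fin F × Fin K => P p.1 p.2 = some s)).erase (j, k),
              W (d p.2) p.1) := by
  constructor
  · intro k
    have : (Finset.univ.filter (fun p : Fin N × Fin F => P p.2 k = none))
        = Finset.univ ×ˢ (Finset.univ.filter (fun j : Fin F => P j k = none)) := by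
      ext p
      simp [Finset.mem_filter, Finset.mem_product]
    rw [this, Finset.card_product, hC1 k, Finset.card_univ, Fintype.card_fin]
  · intro k j
    cases hP : P j k with
    | none => exact Or.inl rfl
    | some s =>
      refine Or.inr ⟨s, rfl, ?_, ?_⟩
      · intro p hp
        rw [Finset.mem_erase, Finset.mem_filter] at hp
        exact (hC3 j k p.1 p.2 s hP hp.2.2 hp.1.symm).2
      · have hmem : (j, k) ∈ Finset.univ.filter
            (fun p : Fin F × Fin K => P p.1 p.2 = some s) := by
          simp [hP]
        rw [eq_sub_iff_add_eq, add_comm,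
          Finset.sum_erase_add _ _ hmem]
end

section
/- In the CWLZC 1D MACC node-placement construction: if a (K',F',Z',S') PDA P satisfies Condition C4 (each row has exactly t stars, where t = K'Z'/F'), and for each row j the star column set A_j ⊆ [K'] (|A_j| = t, sorted increasingly) is mapped to C_j = { A_j[i] + (i-1)(L-1) : i ∈ [t] } ⊆ [K] with K = K' + t(L-1), then any two distinct elements k_1, k_2 ∈ C_j satisfy cyclic distance D_r(k_1,k_2) := min( <k_1-k_2>_K, K - <k_1-k_2>_K ) ≥ L. -/
lemma aux_gap {t : ℕ} (g : Fin t → ℕ) (hg : StrictMono g) :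
    ∀ d (i j : Fin t), i.val + d = j.val → g i + d ≤ g j := by
  intro d
  induction d with
  | zero =>
    intro i j h
    have : i = j := Fin.ext (by omega)
    subst this; omega
  | succ d ih =>
    intro i j h
    have hj' : i.val + d < t := by omega
    have h1 := ih i ⟨i.val + d, hj'⟩ rfl
    have h2 : g ⟨i.val + d, hj'⟩ < g j := hg (by simp [Fin.lt_def]; omega)
    omega

/-- CWLZC node-placement spacing: if `A ⊆ [K']` with `|A| = t` (the star columns of a row of a
PDA satisfying C4) is mapped to `C = {A[i] + (i-1)(L-1) : i ∈ [t]} ⊆ [K]` with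
`K = K' + t(L-1)` (here `A[i]` is the `i`-th smallest element, and indexing is 0-based via
`orderIsoOfFin`), then any two distinct elements of `C` are at cyclic distance
`D_r(k₁,k₂) = min(⟨k₁-k₂⟩_K, K - ⟨k₁-k₂⟩_K) ≥ L`. -/
theorem stmt_14 (K' L t K : ℕ) (hL : 1 ≤ L) (hK : K = K' + t * (L - 1))
    (htK : t * L ≤ K) (A : Finset ℕ) (hA : A ⊆ Finset.Icc 1 K') (hcard : A.card = t) :
    ∀ i₁ i₂ : Fin t, i₁ ≠ i₂ →
      L ≤ min
        (((((A.orderIsoOfFin hcard i₁ : ℕ)) + i₁.val * (L - 1)) + K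
            - (((A.orderIsoOfFin hcard i₂ : ℕ)) + i₂.val * (L - 1))) % K)
        (K - ((((A.orderIsoOfFin hcard i₁ : ℕ)) + i₁.val * (L - 1)) + K
            - (((A.orderIsoOfFin hcard i₂ : ℕ)) + i₂.val * (L - 1))) % K) := by
  obtain ⟨l, rfl⟩ : ∃ l, L = l + 1 := ⟨L - 1, by omega⟩
  simp only [Nat.add_sub_cancel] at *
  intro i₁ i₂ hne
  have ht : 0 < t := i₁.pos
  set g : Fin t → ℕ := fun i => (A.orderIsoOfFin hcard i : ℕ) with hgdef
  have hmono : StrictMono g := fun a b hab => by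
    simpa [hgdef] using (A.orderIsoOfFin hcard).strictMono hab
  have hmem : ∀ i : Fin t, 1 ≤ g i ∧ g i ≤ K' := by
    intro i
    have : (g i) ∈ Finset.Icc 1 K' := hA (A.orderIsoOfFin hcard i).2
    simpa using this
  -- product facts
  have htl : (t - 1) * l + l = t * l := by
    have : (t - 1) + 1 = t := by omega
    calc (t - 1) * l + l = ((t - 1) + 1) * l := by ring
      _ = t * l := by rw [this]
  have hvt : ∀ i : Fin t, i.val * l ≤ (t - 1) * l :=
    fun i => Nat.mul_le_mul_right _ (by omega)
  have hm1 := hmem i₁; have hm2 := hmem i₂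
  have hv1 := hvt i₁; have hv2 := hvt i₂
  rcases Nat.lt_or_ge i₁.val i₂.val with hlt | hge
  · -- i₁ < i₂
    have hgap := aux_gap g hmono (i₂.val - i₁.val) i₁ i₂ (by omega)
    have hml : (i₁.val + 1) * l ≤ i₂.val * l := Nat.mul_le_mul_right _ (by omega)
    have hml' : i₁.val * l + l ≤ i₂.val * l := by
      have : (i₁.val + 1) * l = i₁.val * l + l := by ring
      omega
    have hmod : (g i₁ + i₁.val * l + K - (g i₂ + i₂.val * l)) % K
        = g i₁ + i₁.val * l + K - (g i₂ + i₂.val * l) :=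
      Nat.mod_eq_of_lt (by omega)
    rw [hmod]
    omega
  · have hlt2 : i₂.val < i₁.val := by
      rcases Nat.lt_or_ge i₂.val i₁.val with h | h
      · exact h
      · exact absurd (Fin.ext (by omega)) hne
    have hgap := aux_gap g hmono (i₁.val - i₂.val) i₂ i₁ (by omega)
    have hml : (i₂.val + 1) * l ≤ i₁.val * l := Nat.mul_le_mul_right _ (by omega)
    have hml' : i₂.val * l + l ≤ i₁.val * l := by
      have : (i₂.val + 1) * l = i₂.val * l + l := by ring
      omega
    have heq : g i₁ + i₁.val * l + K - (g i₂ + i₂.val * l)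
        = K + (g i₁ + i₁.val * l - (g i₂ + i₂.val * l)) := by omega
    rw [heq, Nat.add_mod_left, Nat.mod_eq_of_lt (by omega)]
    omega
end
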